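/- arXiv:2210.06000 — 4 statements merged into one kernel-verified Lean document; each statement's English description precedes it below -/
import Mathlib

section
/- For any graph G with v vertices and e edges and all natural numbers m, the DP color function satisfies P_DP(G,m) ≤ m^v (m-1)^e / m^e. -/
open SimpleGraph

/-- The number of proper `m`-colorings of a graph `G`. -/
noncomputable def numColorings {V : Type} (G : SimpleGraph V) (m : ℕ) : ℕ :=
  Nat.card {c : V → Fin m // ∀ ⦃a b : V⦄, G.Adj a b → c a ≠ c b}

/-- An `m`-fold cover `(L, H)` of a graph `G`. -/
structure DPCover {V : Type} (G : SimpleGraph V) (m : ℕ) where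
  X : Type
  H : SimpleGraph X
  L : V → Set X
  partition : ∀ x : X, ∃! v : V, x ∈ L v
  fold : ∀ v : V, Nat.card (L v) = m
  cliques : ∀ v : V, ∀ x ∈ L v, ∀ y ∈ L v, x ≠ y → H.Adj x y
  cross : ∀ u v : V, ∀ x ∈ L u, ∀ y ∈ L v, H.Adj x y → u = v ∨ G.Adj u v
  matching : ∀ u v : V, G.Adj u v → ∀ x ∈ L u, ∀ y ∈ L v, ∀ z ∈ L v,
      H.Adj x y → H.Adj x z → y = z
  matching' : ∀ u v : V, G.Adj u v → ∀ y ∈ L u, ∀ z ∈ L u, ∀ x ∈ L v,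
      H.Adj y x → H.Adj z x → y = z

/-- A cover is full if for each edge `uv` of `G` the matching between `L u` and `L v`
is a perfect matching. -/
def DPCover.IsFull {V : Type} {G : SimpleGraph V} {m : ℕ} (C : DPCover G m) : Prop :=
  ∀ u v : V, G.Adj u v → ∀ x ∈ C.L u, ∃ y ∈ C.L v, C.H.Adj x y

/-- An `H`-coloring of `G`, viewed as an independent transversal of the lists. -/
def DPCover.IsColoring {V : Type} {G : SimpleGraph V} {m : ℕ} (C : DPCover G m)
    (f : V → C.X) : Prop :=
  (∀ v : V, f v ∈ C.L v) ∧ ∀ u v : V, u ≠ v → ¬ C.H.Adj (f u) (f v)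

/-- `P_DP(G, 𝓗)`, the number of `𝓗`-colorings of `G`. -/
noncomputable def DPCover.count {V : Type} {G : SimpleGraph V} {m : ℕ}
    (C : DPCover G m) : ℕ :=
  Nat.card {f : V → C.X // C.IsColoring f}

/-- The DP color function `P_DP(G, m)`. -/
noncomputable def PDP {V : Type} (G : SimpleGraph V) (m : ℕ) : ℕ :=
  sInf {n : ℕ | ∃ C : DPCover G m, C.count = n}

/-- The DP-chromatic number `χ_DP(G)`. -/
noncomputable def chiDP {V : Type} (G : SimpleGraph V) : ℕ :=
  sInf {m : ℕ | ∀ C : DPCover G m, ∃ f : V → C.X, C.IsColoring f}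

/-- A canonical labeling of an `m`-fold cover. -/
def DPCover.HasCanonicalLabeling {V : Type} {G : SimpleGraph V} {m : ℕ}
    (C : DPCover G m) : Prop :=
  ∃ φ : V × Fin m → C.X, Function.Bijective φ ∧ (∀ v j, φ (v, j) ∈ C.L v) ∧
    ∀ u v : V, G.Adj u v → ∀ j : Fin m, C.H.Adj (φ (u, j)) (φ (v, j))

/-- A graph is 2-connected if it has at least 3 vertices, is connected, and
remains connected after deleting any single vertex. -/
def TwoConnected {V : Type} (G : SimpleGraph V) : Prop :=
  3 ≤ Nat.card V ∧ G.Connected ∧ ∀ v : V, (G.induce ({v}ᶜ : Set V)).Connected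

/-!
Average over a family of `m ^ e` covers. Identify `Fin m` with `ℤ/m`, orient every edge and pick a
shift `τ d` for each edge `d`; the cover on `V × Fin m` whose matching on an oriented edge `uw` is
`(u, i) ~ (w, i + τ uw)` has as colorings exactly the maps `c : V → Fin m` with
`c w - c u ≠ τ uw` on every edge. A fixed map `c` is a coloring for exactly `(m - 1) ^ e` choices
of `τ`, so the covers have `m ^ v * (m - 1) ^ e / m ^ e` colorings on average, and the minimum
`P_DP(G, m)` is at most that average.
-/

section

variable {V A : Type}

lemma PDP_le_count {G : SimpleGraph V} {m : ℕ} (C : DPCover G m) : PDP G m ≤ C.count :=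
  Nat.sInf_le ⟨C, rfl⟩

def emptyCover (G : SimpleGraph V) : DPCover G 0 where
  X := Empty
  H := ⊥
  L _ := ∅
  partition x := x.elim
  fold _ := by simp
  cliques _ x := x.elim
  cross _ _ x := x.elim
  matching _ _ _ x := x.elim
  matching' _ _ _ y := y.elim

lemma emptyCover_count [Fintype V] (G : SimpleGraph V) :
    (emptyCover G).count = 0 ^ Fintype.card V := by
  rw [DPCover.count, Nat.card_congr (Equiv.subtypeUnivEquiv fun f =>
    ⟨fun v => (f v).elim, fun u => (f u).elim⟩), Nat.card_fun]
  simp [emptyCover]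

lemma PDP_zero_le [Fintype V] (G : SimpleGraph V) : PDP G 0 ≤ 0 ^ Fintype.card V :=
  emptyCover_count G ▸ PDP_le_count (emptyCover G)

section ShiftCover

variable [AddCommGroup A]

def shiftGraph (G : SimpleGraph V) (s : V → V → A) (hs : ∀ u w, s w u = -s u w) :
    SimpleGraph (V × A) where
  Adj p q := (p.1 = q.1 ∧ p.2 ≠ q.2) ∨ (G.Adj p.1 q.1 ∧ q.2 - p.2 = s p.1 q.1)
  symm := ⟨by
    rintro p q (⟨h1, h2⟩ | ⟨h1, h2⟩)
    · exact Or.inl ⟨h1.symm, h2.symm⟩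
    · exact Or.inr ⟨h1.symm, by rw [hs, ← h2, neg_sub]⟩⟩
  loopless := ⟨by rintro p (⟨-, h⟩ | ⟨h, -⟩) <;> simp_all⟩

lemma shiftGraph_adj_of_fst_ne {G : SimpleGraph V} {s : V → V → A} {hs : ∀ u w, s w u = -s u w}
    {p q : V × A} (hpq : p.1 ≠ q.1) :
    (shiftGraph G s hs).Adj p q ↔ G.Adj p.1 q.1 ∧ q.2 - p.2 = s p.1 q.1 := by
  simp [shiftGraph, hpq]

def shiftCover (G : SimpleGraph V) (s : V → V → A) (hs : ∀ u w, s w u = -s u w) (m : ℕ)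
    (hA : Nat.card A = m) : DPCover G m where
  X := V × A
  H := shiftGraph G s hs
  L w := {p | p.1 = w}
  partition p := ⟨p.1, rfl, fun _ h => h.symm⟩
  fold w := by
    rw [← hA]
    exact Nat.card_congr
      ⟨fun p => p.1.2, fun i => ⟨(w, i), rfl⟩, fun p => Subtype.ext (Prod.ext p.2.symm rfl),
        fun _ => rfl⟩
  cliques w x hx y hy hxy :=
    Or.inl ⟨hx.trans hy.symm, fun h => hxy (Prod.ext (hx.trans hy.symm) h)⟩
  cross u w x hx y hy := by
    rintro (⟨h, -⟩ | ⟨h, -⟩)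
    · exact Or.inl (hx ▸ hy ▸ h)
    · exact Or.inr (hx ▸ hy ▸ h)
  matching u w huw x hx y hy z hz hxy hxz := by
    subst hx
    rw [shiftGraph_adj_of_fst_ne (hy ▸ huw.ne)] at hxy
    rw [shiftGraph_adj_of_fst_ne (hz ▸ huw.ne), ← hy.trans hz.symm] at hxz
    exact Prod.ext (hy.trans hz.symm) (sub_left_inj.mp (hxy.2.trans hxz.2.symm))
  matching' u w huw y hy z hz x hx hyx hzx := by
    subst hx
    rw [shiftGraph_adj_of_fst_ne (hy ▸ huw.ne)] at hyx
    rw [shiftGraph_adj_of_fst_ne (hz ▸ huw.ne), ← hy.trans hz.symm] at hzx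
    exact Prod.ext (hy.trans hz.symm) (sub_right_inj.mp (hyx.2.trans hzx.2.symm))

lemma shiftCover_count {G : SimpleGraph V} (s : V → V → A) (hs : ∀ u w, s w u = -s u w)
    (m : ℕ) (hA : Nat.card A = m) :
    (shiftCover G s hs m hA).count =
      Nat.card {c : V → A // ∀ u w, G.Adj u w → c w - c u ≠ s u w} := by
  refine Nat.card_congr ⟨fun f => ⟨fun w => (f.1 w).2, ?_⟩, fun c => ⟨fun w => (w, c.1 w), ?_⟩,
    fun f => ?_, fun c => rfl⟩
  · intro u w huw heq
    have hu : (f.1 u).1 = u := f.2.1 u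
    have hw : (f.1 w).1 = w := f.2.1 w
    refine f.2.2 u w huw.ne
      ((shiftGraph_adj_of_fst_ne (hs := hs) (hu.symm ▸ hw.symm ▸ huw.ne)).2 ?_)
    rw [hu, hw]
    exact ⟨huw, heq⟩
  · refine ⟨fun w => rfl, fun u w huw hadj => ?_⟩
    change (shiftGraph G s hs).Adj (u, c.1 u) (w, c.1 w) at hadj
    rw [shiftGraph_adj_of_fst_ne huw] at hadj
    exact c.2 u w hadj.1 hadj.2
  · exact Subtype.ext (funext fun w => Prod.ext (f.2.1 w).symm rfl)

end ShiftCover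

section EdgeShift

variable [LinearOrder V] {G : SimpleGraph V} [AddCommGroup A]

open scoped Classical in
variable (G) in
noncomputable def edgeShift (τ : G.edgeSet → A) (u w : V) : A :=
  if h : G.Adj u w then (if u < w then τ ⟨s(u, w), h⟩ else -τ ⟨s(u, w), h⟩) else 0

lemma edgeShift_swap (τ : G.edgeSet → A) (u w : V) :
    edgeShift G τ w u = -edgeShift G τ u w := by
  by_cases h : G.Adj u w
  · have hτ : τ ⟨s(w, u), h.symm⟩ = τ ⟨s(u, w), h⟩ := congrArg τ (Subtype.ext Sym2.eq_swap)
    rcases lt_or_gt_of_ne h.ne with hlt | hlt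
    · simp [edgeShift, h, h.symm, hlt, hlt.not_gt, hτ]
    · simp [edgeShift, h, h.symm, hlt, hlt.not_gt, hτ]
  · have h' : ¬G.Adj w u := fun h' => h h'.symm
    simp [edgeShift, h, h']

lemma sub_eq_edgeShift_iff {τ : G.edgeSet → A} {c : V → A} {u w : V} (h : G.Adj u w) :
    c w - c u = edgeShift G τ u w ↔ τ ⟨s(u, w), h⟩ = c s(u, w).sup - c s(u, w).inf := by
  rcases lt_or_gt_of_ne h.ne with hlt | hlt
  · simp [edgeShift, h, hlt, hlt.le, eq_comm]
  · simp only [edgeShift, dif_pos h, if_neg hlt.not_gt, Sym2.sup_mk, Sym2.inf_mk,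
      sup_of_le_left hlt.le, inf_of_le_right hlt.le]
    rw [← neg_sub, neg_inj, eq_comm]

lemma forall_adj_sub_ne_edgeShift_iff (τ : G.edgeSet → A) (c : V → A) :
    (∀ u w, G.Adj u w → c w - c u ≠ edgeShift G τ u w) ↔
      ∀ d : G.edgeSet, τ d ≠ c d.1.sup - c d.1.inf := by
  refine ⟨fun hc => ?_, fun hc u w h => (sub_eq_edgeShift_iff h).not.2 (hc _)⟩
  rintro ⟨d, hd⟩
  induction d using Sym2.ind with
  | _ u w => exact (sub_eq_edgeShift_iff hd).not.1 (hc u w hd)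

end EdgeShift

open Finset

lemma card_filter_forall_apply_ne {ι : Type} [Fintype ι] [DecidableEq ι] [Fintype A]
    [DecidableEq A] (g : ι → A) :
    #{f : ι → A | ∀ i, f i ≠ g i} = (Fintype.card A - 1) ^ Fintype.card ι := by
  rw [← Fintype.card_subtype,
    Fintype.card_congr (Equiv.subtypePiEquivPi (p := fun i a => a ≠ g i)), Fintype.card_pi]
  simp [Fintype.card_subtype_compl]

lemma sum_count_shiftCover_edgeShift [LinearOrder V] [Fintype V] (G : SimpleGraph V)
    [Fintype G.edgeSet] [AddCommGroup A] [Fintype A] (m : ℕ) (hA : Nat.card A = m) :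
    ∑ τ : G.edgeSet → A, (shiftCover G (edgeShift G τ) (edgeShift_swap τ) m hA).count =
      m ^ Fintype.card V * (m - 1) ^ Fintype.card G.edgeSet := by
  classical
  let R : (V → A) → (G.edgeSet → A) → Prop := fun c τ => ∀ d, τ d ≠ c d.1.sup - c d.1.inf
  have hcount : ∀ τ, (shiftCover G (edgeShift G τ) (edgeShift_swap τ) m hA).count =
      #(univ.bipartiteBelow R τ) := by
    intro τ
    rw [shiftCover_count, bipartiteBelow, ← Fintype.card_subtype, ← Nat.card_eq_fintype_card]
    exact Nat.card_congr (Equiv.subtypeEquivRight fun c => forall_adj_sub_ne_edgeShift_iff τ c)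
  have hA' : Fintype.card A = m := by rw [← Nat.card_eq_fintype_card, hA]
  rw [sum_congr rfl fun τ _ => hcount τ, ← sum_card_bipartiteAbove_eq_sum_card_bipartiteBelow]
  simp only [bipartiteAbove, R, card_filter_forall_apply_ne, sum_const, card_univ,
    Fintype.card_fun, hA', smul_eq_mul]

lemma exists_dpCover_count_mul_le [Fintype V] (G : SimpleGraph V) (m : ℕ) [NeZero m] :
    ∃ C : DPCover G m, C.count * m ^ Nat.card G.edgeSet ≤
      m ^ Fintype.card V * (m - 1) ^ Nat.card G.edgeSet := by
  classical
  let _ : LinearOrder V := LinearOrder.lift' _ (Fintype.equivFin V).injective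
  let _ : Fintype G.edgeSet := Fintype.ofFinite _
  have hsum := sum_count_shiftCover_edgeShift G m (Nat.card_fin m)
  rw [← Nat.card_eq_fintype_card (α := G.edgeSet)] at hsum
  obtain ⟨τ, -, hτ⟩ := exists_le_of_sum_le (univ_nonempty (α := G.edgeSet → Fin m))
    (f := fun τ => (shiftCover G (edgeShift G τ) (edgeShift_swap τ) m _).count *
      m ^ Nat.card G.edgeSet)
    (g := fun _ => m ^ Fintype.card V * (m - 1) ^ Nat.card G.edgeSet) <| le_of_eq <| by
      rw [sum_const, card_univ, Fintype.card_fun, Fintype.card_fin, ← sum_mul, hsum,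
        Nat.card_eq_fintype_card, smul_eq_mul, mul_comm]
  exact ⟨_, hτ⟩

end

theorem stmt_7 {V : Type} [Fintype V] (G : SimpleGraph V)
    (v e : ℕ) (hv : Fintype.card V = v) (he : Nat.card G.edgeSet = e) (m : ℕ) :
    (PDP G m : ℚ) ≤ (m : ℚ) ^ v * ((m : ℚ) - 1) ^ e / (m : ℚ) ^ e := by
  subst hv he
  rcases m.eq_zero_or_pos with rfl | hm
  · rcases (Fintype.card V).eq_zero_or_pos with hv | hv
    · have : IsEmpty V := Fintype.card_eq_zero_iff.mp hv
      have he : Nat.card G.edgeSet = 0 := by simp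
      simpa [hv, he] using PDP_zero_le G
    · have hPDP : PDP G 0 = 0 := by simpa [zero_pow hv.ne'] using PDP_zero_le G
      simp [hPDP, zero_pow hv.ne']
  · have := NeZero.of_pos hm
    obtain ⟨C, hC⟩ := exists_dpCover_count_mul_le G m
    rw [le_div_iff₀ (by positivity)]
    calc (PDP G m : ℚ) * m ^ Nat.card G.edgeSet ≤ C.count * m ^ Nat.card G.edgeSet := by
          gcongr; exact_mod_cast PDP_le_count C
      _ ≤ _ := by rw [← Nat.cast_pred hm]; exact_mod_cast hC
end

section
/- Let G be a graph on n vertices and let u, v be distinct nonadjacent vertices of G. If G' = G + uv, then for all m ∈ ℕ, P_DP(G',m) ≤ P_DP(G,m)·(m-1)/m. -/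
open SimpleGraph

section Aux

variable {V : Type} {G : SimpleGraph V} {m : ℕ}

lemma DPCover.mem_unique (C : DPCover G m) {x : C.X} {a b : V}
    (ha : x ∈ C.L a) (hb : x ∈ C.L b) : a = b := by
  obtain ⟨w, -, hw⟩ := C.partition x
  exact (hw a ha).trans (hw b hb).symm

/-- A trivial cover with no cross edges. -/
def trivialCover (G : SimpleGraph V) (m : ℕ) : DPCover G m where
  X := V × Fin m
  H := SimpleGraph.fromRel fun x y => x.1 = y.1
  L v := {x | x.1 = v}
  partition x := ⟨x.1, rfl, fun y hy => hy.symm⟩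
  fold v := by
    have e : {x : V × Fin m | x.1 = v} ≃ Fin m :=
      { toFun := fun x => x.1.2
        invFun := fun j => ⟨(v, j), rfl⟩
        left_inv := fun x => by
          obtain ⟨⟨a, i⟩, hx⟩ := x
          simp only [Set.mem_setOf_eq] at hx
          subst hx; rfl
        right_inv := fun j => rfl }
    rw [Nat.card_congr e, Nat.card_eq_fintype_card, Fintype.card_fin]
  cliques v x hx y hy hxy := ⟨hxy, Or.inl (hx.trans hy.symm)⟩
  cross a b x hx y hy h := by
    rcases h with ⟨-, h | h⟩
    · exact Or.inl ((hx.symm.trans h).trans hy)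
    · exact Or.inl ((hx.symm.trans h.symm).trans hy)
  matching a b hab x hx y hy z hz e1 e2 := by
    exfalso
    rcases e1 with ⟨-, h | h⟩
    · exact hab.ne ((hx.symm.trans h).trans hy)
    · exact hab.ne ((hx.symm.trans h.symm).trans hy)
  matching' a b hab y hy z hz x hx e1 e2 := by
    exfalso
    rcases e1 with ⟨-, h | h⟩
    · exact hab.ne ((hy.symm.trans h).trans hx)
    · exact hab.ne ((hy.symm.trans h.symm).trans hx)

/-- The matching function between `L u` and `L v`, extended by the identity. -/
noncomputable def barFn (C : DPCover G m) (u v : V) (t : C.L u ≃ C.L v) (x : C.X) : C.X := by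
  classical exact if h : x ∈ C.L u then (t ⟨x, h⟩ : C.X) else x

lemma barFn_eq (C : DPCover G m) (u v : V) (t : C.L u ≃ C.L v) {x : C.X}
    (h : x ∈ C.L u) : barFn C u v t x = (t ⟨x, h⟩ : C.X) := by
  simp [barFn, h]

lemma barFn_mem (C : DPCover G m) (u v : V) (t : C.L u ≃ C.L v) {x : C.X}
    (h : x ∈ C.L u) : barFn C u v t x ∈ C.L v := by
  rw [barFn_eq C u v t h]; exact (t ⟨x, h⟩).2

lemma barFn_inj (C : DPCover G m) (u v : V) (t : C.L u ≃ C.L v) {x y : C.X}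
    (hx : x ∈ C.L u) (hy : y ∈ C.L u)
    (h : barFn C u v t x = barFn C u v t y) : x = y := by
  rw [barFn_eq C u v t hx, barFn_eq C u v t hy] at h
  exact congrArg Subtype.val (t.injective (Subtype.ext h))

lemma addCover_matching (C : DPCover G m) (u v : V) (t : C.L u ≃ C.L v)
    (huv : u ≠ v) (hadj : ¬ G.Adj u v) :
    ∀ a b : V, (G ⊔ SimpleGraph.fromEdgeSet {s(u, v)}).Adj a b →
      ∀ x ∈ C.L a, ∀ y ∈ C.L b, ∀ z ∈ C.L b,
      (C.H ⊔ SimpleGraph.fromRel (fun x y => x ∈ C.L u ∧ y = barFn C u v t x)).Adj x y →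
      (C.H ⊔ SimpleGraph.fromRel (fun x y => x ∈ C.L u ∧ y = barFn C u v t x)).Adj x z →
      y = z := by
  intro a b hab x hx y hy z hz e1 e2
  rcases (sup_adj _ _ _ _).mp hab with hG | hE
  · have noNew : ∀ p q : C.X, p ∈ C.L a → q ∈ C.L b →
        ¬ (SimpleGraph.fromRel (fun x y => x ∈ C.L u ∧ y = barFn C u v t x)).Adj p q := by
      intro p q hp hq h
      rcases h with ⟨-, hR | hR⟩
      · have ha : a = u := C.mem_unique hp hR.1
        have hb : b = v := C.mem_unique hq (hR.2 ▸ barFn_mem C u v t hR.1)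
        exact hadj (ha ▸ hb ▸ hG)
      · have hb : b = u := C.mem_unique hq hR.1
        have ha : a = v := C.mem_unique hp (hR.2 ▸ barFn_mem C u v t hR.1)
        exact hadj (ha ▸ hb ▸ hG).symm
    rcases (sup_adj _ _ _ _).mp e1 with h1 | h1
    · rcases (sup_adj _ _ _ _).mp e2 with h2 | h2
      · exact C.matching a b hG x hx y hy z hz h1 h2
      · exact absurd h2 (noNew x z hx hz)
    · exact absurd h1 (noNew x y hx hy)
  · have hcase : (a = u ∧ b = v) ∨ (a = v ∧ b = u) := by
      have h2 := ((fromEdgeSet_adj _).mp hE).1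
      rw [Set.mem_singleton_iff, Sym2.eq_iff] at h2
      tauto
    have noOld : ∀ p q : C.X, p ∈ C.L a → q ∈ C.L b → ¬ C.H.Adj p q := by
      intro p q hp hq h
      rcases C.cross a b p hp q hq h with h | h
      · rcases hcase with ⟨h1, h2⟩ | ⟨h1, h2⟩
        · exact huv (by rw [← h1, ← h2]; exact h)
        · exact huv (by rw [← h2, ← h1]; exact h.symm)
      · rcases hcase with ⟨h1, h2⟩ | ⟨h1, h2⟩
        · exact hadj (h1 ▸ h2 ▸ h)
        · exact hadj (h1 ▸ h2 ▸ h).symm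
    rcases (sup_adj _ _ _ _).mp e1 with h1 | h1
    · exact absurd h1 (noOld x y hx hy)
    rcases (sup_adj _ _ _ _).mp e2 with h2 | h2
    · exact absurd h2 (noOld x z hx hz)
    rcases hcase with ⟨ha, hb⟩ | ⟨ha, hb⟩
    · have hy' : y = barFn C u v t x := by
        rcases h1 with ⟨-, hR | hR⟩
        · exact hR.2
        · exact absurd (hb.symm.trans (C.mem_unique hy hR.1)).symm huv
      have hz' : z = barFn C u v t x := by
        rcases h2 with ⟨-, hR | hR⟩
        · exact hR.2
        · exact absurd (hb.symm.trans (C.mem_unique hz hR.1)).symm huv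
      rw [hy', hz']
    · have hy' : x = barFn C u v t y := by
        rcases h1 with ⟨-, hR | hR⟩
        · exact absurd (ha.symm.trans (C.mem_unique hx hR.1)).symm huv
        · exact hR.2
      have hz' : x = barFn C u v t z := by
        rcases h2 with ⟨-, hR | hR⟩
        · exact absurd (ha.symm.trans (C.mem_unique hx hR.1)).symm huv
        · exact hR.2
      exact barFn_inj C u v t (hb ▸ hy) (hb ▸ hz) (hy'.symm.trans hz')

/-- The cover of `G + uv` obtained from a cover of `G` by adding the matching `t`. -/
noncomputable def addCover (C : DPCover G m) (u v : V) (t : C.L u ≃ C.L v)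
    (huv : u ≠ v) (hadj : ¬ G.Adj u v) :
    DPCover (G ⊔ SimpleGraph.fromEdgeSet {s(u, v)}) m where
  X := C.X
  H := C.H ⊔ SimpleGraph.fromRel (fun x y => x ∈ C.L u ∧ y = barFn C u v t x)
  L := C.L
  partition := C.partition
  fold := C.fold
  cliques w x hx y hy hxy := (sup_adj _ _ _ _).mpr (Or.inl (C.cliques w x hx y hy hxy))
  cross a b x hx y hy hxy := by
    rcases (sup_adj _ _ _ _).mp hxy with h | ⟨hne, hR | hR⟩
    · rcases C.cross a b x hx y hy h with h | h
      · exact Or.inl h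
      · exact Or.inr ((sup_adj _ _ _ _).mpr (Or.inl h))
    · have ha : a = u := C.mem_unique hx hR.1
      have hb : b = v := C.mem_unique hy (hR.2 ▸ barFn_mem C u v t hR.1)
      subst ha; subst hb
      exact Or.inr ((sup_adj _ _ _ _).mpr (Or.inr ((fromEdgeSet_adj _).mpr ⟨rfl, huv⟩)))
    · have hb : b = u := C.mem_unique hy hR.1
      have ha : a = v := C.mem_unique hx (hR.2 ▸ barFn_mem C u v t hR.1)
      subst ha; subst hb
      exact Or.inr ((sup_adj _ _ _ _).mpr (Or.inr ((fromEdgeSet_adj _).mpr ⟨Sym2.eq_swap, huv.symm⟩)))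
  matching := addCover_matching C u v t huv hadj
  matching' a b hab y hy z hz x hx e1 e2 :=
    addCover_matching C u v t huv hadj b a hab.symm x hx y hy z hz e1.symm e2.symm

lemma addCover_isColoring_iff (C : DPCover G m) (u v : V) (t : C.L u ≃ C.L v)
    (huv : u ≠ v) (hadj : ¬ G.Adj u v) (f : V → C.X) :
    (addCover C u v t huv hadj).IsColoring f ↔
      C.IsColoring f ∧ f v ≠ barFn C u v t (f u) := by
  constructor
  · rintro ⟨hmem, hind⟩
    have hmem' : ∀ w : V, f w ∈ C.L w := hmem
    refine ⟨⟨hmem', fun a b hab h => hind a b hab ((sup_adj _ _ _ _).mpr (Or.inl h))⟩, ?_⟩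
    intro hEq
    apply hind u v huv
    refine (sup_adj _ _ _ _).mpr (Or.inr ⟨?_, Or.inl ⟨hmem' u, hEq⟩⟩)
    intro hfeq
    exact huv (C.mem_unique (hfeq ▸ hmem' u) (hmem' v))
  · rintro ⟨⟨hmem, hind⟩, hne⟩
    refine ⟨hmem, fun a b hab h => ?_⟩
    rcases (sup_adj _ _ _ _).mp h with h | ⟨-, hR | hR⟩
    · exact hind a b hab h
    · have ha : a = u := C.mem_unique (hmem a) hR.1
      have hb : b = v := C.mem_unique (hmem b) (hR.2 ▸ barFn_mem C u v t hR.1)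
      exact hne (by have h2 := hR.2; rw [ha, hb] at h2; exact h2)
    · have hb : b = u := C.mem_unique (hmem b) hR.1
      have ha : a = v := C.mem_unique (hmem a) (hR.2 ▸ barFn_mem C u v t hR.1)
      exact hne (by have h2 := hR.2; rw [ha, hb] at h2; exact h2)

end Aux

theorem stmt_10 {V : Type} [Fintype V] (G : SimpleGraph V) (u v : V)
    (huv : u ≠ v) (hadj : ¬ G.Adj u v) (m : ℕ) :
    (PDP (G ⊔ SimpleGraph.fromEdgeSet {s(u, v)}) m : ℚ) ≤
      (PDP G m : ℚ) * ((m : ℚ) - 1) / (m : ℚ) := by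
  classical
  rcases Nat.eq_zero_or_pos m with hm | hm
  · -- m = 0 : both sides are zero
    subst hm
    have hcount : (trivialCover (G ⊔ SimpleGraph.fromEdgeSet {s(u, v)}) 0).count = 0 := by
      have he : IsEmpty {f : V → (trivialCover (G ⊔ SimpleGraph.fromEdgeSet {s(u, v)}) 0).X //
          (trivialCover (G ⊔ SimpleGraph.fromEdgeSet {s(u, v)}) 0).IsColoring f} :=
        ⟨fun f => (f.1 u).2.elim0⟩
      exact Nat.card_of_isEmpty
    have h0 : PDP (G ⊔ SimpleGraph.fromEdgeSet {s(u, v)}) 0 = 0 :=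
      Nat.le_zero.mp (Nat.sInf_le ⟨_, hcount⟩)
    rw [h0]
    norm_num
  · haveI : NeZero m := ⟨hm.ne'⟩
    haveI : Nonempty (Fin m) := ⟨⟨0, hm⟩⟩
    have hne : ({n | ∃ C : DPCover G m, C.count = n}).Nonempty := ⟨_, trivialCover G m, rfl⟩
    obtain ⟨C, hC⟩ := Nat.sInf_mem hne
    -- hC : C.count = PDP G m
    haveI hLfin : ∀ w : V, Finite (C.L w) := fun w =>
      Nat.finite_of_card_ne_zero (by rw [C.fold]; omega)
    haveI hSfin : Finite {f : V → C.X // C.IsColoring f} := by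
      apply Finite.of_injective
        (fun f : {f : V → C.X // C.IsColoring f} => (fun w => (⟨f.1 w, f.2.1 w⟩ : C.L w)))
      intro f g h
      apply Subtype.ext
      funext w
      exact congrArg Subtype.val (congrFun h w)
    haveI := Fintype.ofFinite (C.L u)
    haveI := Fintype.ofFinite (C.L v)
    have eu : C.L u ≃ Fin m :=
      Fintype.equivFinOfCardEq (by rw [← Nat.card_eq_fintype_card, C.fold])
    have ev : C.L v ≃ Fin m :=
      Fintype.equivFinOfCardEq (by rw [← Nat.card_eq_fintype_card, C.fold])
    set n := C.count with hn
    set tj : Fin m → (↥(C.L u) ≃ ↥(C.L v)) :=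
      fun j => eu.trans ((Equiv.addRight j).trans ev.symm) with htj
    set K : Fin m → ℕ := fun j =>
      Nat.card {f : V → C.X // C.IsColoring f ∧ f v = barFn C u v (tj j) (f u)} with hK
    set g : {f : V → C.X // C.IsColoring f} → Fin m := fun f => ev ⟨f.1 v, f.2.1 v⟩ - eu ⟨f.1 u, f.2.1 u⟩ with hgdef
    have hg : ∀ (f : {f : V → C.X // C.IsColoring f}) (j : Fin m), g f = j ↔ f.1 v = barFn C u v (tj j) (f.1 u) := by
      intro f j
      rw [barFn_eq C u v (tj j) (f.2.1 u)]
      show ev ⟨f.1 v, f.2.1 v⟩ - eu ⟨f.1 u, f.2.1 u⟩ = j ↔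
        f.1 v = ((ev.symm (eu ⟨f.1 u, f.2.1 u⟩ + j) : ↥(C.L v)) : C.X)
      rw [sub_eq_iff_eq_add', ← Equiv.eq_symm_apply, Subtype.ext_iff]
    haveI := Fintype.ofFinite {f : V → C.X // C.IsColoring f}
    have efib : ∀ j : Fin m, {f : {f : V → C.X // C.IsColoring f} // g f = j} ≃
        {f : V → C.X // C.IsColoring f ∧ f v = barFn C u v (tj j) (f u)} := fun j =>
      (Equiv.subtypeEquivRight (fun f => hg f j)).trans
        (Equiv.subtypeSubtypeEquivSubtypeInter (fun f => C.IsColoring f)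
          (fun f => f v = barFn C u v (tj j) (f u)))
    have hsum : ∑ j : Fin m, K j = n := by
      have h1 : Nat.card {f : V → C.X // C.IsColoring f} = ∑ j : Fin m, Nat.card {f : {f : V → C.X // C.IsColoring f} // g f = j} := by
        rw [Nat.card_eq_fintype_card, Fintype.card_congr (Equiv.sigmaFiberEquiv g).symm,
          Fintype.card_sigma]
        simp [Nat.card_eq_fintype_card]
      have h2 : ∀ j : Fin m, K j = Nat.card {f : {f : V → C.X // C.IsColoring f} // g f = j} := fun j =>
        (Nat.card_congr (efib j)).symm
      calc ∑ j : Fin m, K j = ∑ j : Fin m, Nat.card {f : {f : V → C.X // C.IsColoring f} // g f = j} :=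
            Finset.sum_congr rfl (fun j _ => h2 j)
        _ = Nat.card {f : V → C.X // C.IsColoring f} := h1.symm
        _ = n := rfl
    have hex : ∃ j : Fin m, n ≤ m * K j := by
      have hsum2 : ∑ _j : Fin m, n ≤ ∑ j : Fin m, m * K j := by
        rw [← Finset.mul_sum, hsum, Finset.sum_const, Finset.card_univ, Fintype.card_fin,
          smul_eq_mul]
      obtain ⟨j, -, hj⟩ := Finset.exists_le_of_sum_le Finset.univ_nonempty hsum2
      exact ⟨j, hj⟩
    obtain ⟨j, hj⟩ := hex
    set C' := addCover C u v (tj j) huv hadj with hC'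
    have ecol : {f : V → C'.X // C'.IsColoring f} ≃
        {f : V → C.X // C.IsColoring f ∧ f v ≠ barFn C u v (tj j) (f u)} :=
      Equiv.subtypeEquivRight (fun f => addCover_isColoring_iff C u v (tj j) huv hadj f)
    have hsplit : K j + Nat.card {f : V → C.X //
        C.IsColoring f ∧ f v ≠ barFn C u v (tj j) (f u)} = n := by
      have e4 : ({x : {f : V → C.X // C.IsColoring f} // x.1 v = barFn C u v (tj j) (x.1 u)} ⊕
          {x : {f : V → C.X // C.IsColoring f} // ¬ x.1 v = barFn C u v (tj j) (x.1 u)}) ≃ {f : V → C.X // C.IsColoring f} :=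
        Equiv.sumCompl _
      have h5 : Nat.card ({x : {f : V → C.X // C.IsColoring f} // x.1 v = barFn C u v (tj j) (x.1 u)} ⊕
          {x : {f : V → C.X // C.IsColoring f} // ¬ x.1 v = barFn C u v (tj j) (x.1 u)}) = n := Nat.card_congr e4
      rw [Nat.card_sum] at h5
      have h6 : Nat.card {x : {f : V → C.X // C.IsColoring f} // x.1 v = barFn C u v (tj j) (x.1 u)} = K j :=
        Nat.card_congr (Equiv.subtypeSubtypeEquivSubtypeInter (fun f => C.IsColoring f)
          (fun f => f v = barFn C u v (tj j) (f u)))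
      have h7 : Nat.card {x : {f : V → C.X // C.IsColoring f} // ¬ x.1 v = barFn C u v (tj j) (x.1 u)} =
          Nat.card {f : V → C.X // C.IsColoring f ∧ f v ≠ barFn C u v (tj j) (f u)} :=
        Nat.card_congr (Equiv.subtypeSubtypeEquivSubtypeInter (fun f => C.IsColoring f)
          (fun f => f v ≠ barFn C u v (tj j) (f u)))
      rw [h6, h7] at h5
      exact h5
    have hKn : K j ≤ n := hsplit ▸ Nat.le_add_right _ _
    have hC'count : C'.count = n - K j := by
      have : C'.count = Nat.card {f : V → C.X //
          C.IsColoring f ∧ f v ≠ barFn C u v (tj j) (f u)} := Nat.card_congr ecol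
      rw [this, ← hsplit, Nat.add_sub_cancel_left]
    have hle : PDP (G ⊔ SimpleGraph.fromEdgeSet {s(u, v)}) m ≤ n - K j := by
      rw [← hC'count]
      exact Nat.sInf_le ⟨C', rfl⟩
    have hPD : PDP G m = n := hC.symm
    rw [hPD]
    have hmQ : (0 : ℚ) < m := by exact_mod_cast hm
    calc (PDP (G ⊔ SimpleGraph.fromEdgeSet {s(u, v)}) m : ℚ) ≤ ((n - K j : ℕ) : ℚ) := by
          exact_mod_cast hle
      _ = (n : ℚ) - (K j : ℚ) := by rw [Nat.cast_sub hKn]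
      _ ≤ (n : ℚ) * ((m : ℚ) - 1) / m := by
          rw [le_div_iff₀ hmQ]
          have hjQ : (n : ℚ) ≤ (m : ℚ) * (K j : ℚ) := by exact_mod_cast hj
          nlinarith [hjQ]
end

section
/- Let G be a graph with n vertices and let w be a vertex of degree d in G. Then for all m ∈ ℕ, P_DP(G,m) ≤ m(1 - 1/m)^d · P_DP(G − w, m). -/
open SimpleGraph

/-!
Take a cover `𝓗'` of `G - w` with `P_DP(G - w, m)` colorings and extend it to a cover of `G`:
`w` gets a fresh list `{0, …, m - 1}`, and for every neighbour `v` of `w` the color `j` of `w`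
is matched to the color labelled `j + k v` in the list of `v` (for a fixed labelling of that
list and a shift `k v`). The colorings of the extended cover are the pairs (coloring `g` of
`G - w`, color `j` of `w`) in which `j` is matched to the color `g v` of no neighbour `v`.
For a fixed pair exactly one shift is forbidden at each neighbour, so `(m - 1)^d m^(n-1-d)` of
the `m^(n-1)` shift vectors admit it, and averaging gives a shift vector that leaves at most
`m (1 - 1/m)^d P_DP(G - w, m)` colorings.
-/

open Finset

namespace DPCover

variable {V : Type} {G : SimpleGraph V} {m : ℕ}

abbrev Coloring (C : DPCover G m) : Type := {f : V → C.X // C.IsColoring f}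

theorem eq_of_mem_L (C : DPCover G m) {x : C.X} {u v : V} (hu : x ∈ C.L u) (hv : x ∈ C.L v) :
    u = v :=
  (C.partition x).unique hu hv

theorem finite_coloring [Finite V] (C : DPCover G m) (hm : m ≠ 0) : Finite C.Coloring :=
  have (v : V) : Finite (C.L v) := Nat.finite_of_card_ne_zero (by rw [C.fold]; exact hm)
  Finite.of_injective (fun f (v : V) => (⟨f.1 v, f.2.1 v⟩ : C.L v)) fun f g hfg =>
    Subtype.ext <| funext fun v => congrArg Subtype.val (congrFun hfg v)

noncomputable def equivFin (C : DPCover G m) (hm : m ≠ 0) (v : V) : C.L v ≃ Fin m :=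
  (Nat.equivFinOfCardPos (by rw [C.fold]; exact hm)).trans (finCongr (C.fold v))

variable (G m) in
def disjointCliques : DPCover G m where
  X := V × Fin m
  H := { Adj := fun p q => p.1 = q.1 ∧ p ≠ q
         symm := ⟨fun _ _ h => ⟨h.1.symm, h.2.symm⟩⟩
         loopless := ⟨fun _ h => h.2 rfl⟩ }
  L v := {p | p.1 = v}
  partition p := ⟨p.1, rfl, fun _ h => h.symm⟩
  fold v := (Nat.card_congr ⟨fun p => p.1.2, fun j => ⟨(v, j), rfl⟩,
    fun ⟨_, h⟩ => by subst h; rfl, fun _ => rfl⟩).trans (Nat.card_fin m)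
  cliques _ _ hx _ hy hne := ⟨hx.trans hy.symm, hne⟩
  cross _ _ _ hx _ hy h := .inl (hx.symm.trans (h.1.trans hy))
  matching _ _ huv _ hx _ hy _ _ h _ := (G.ne_of_adj huv (hx.symm.trans (h.1.trans hy))).elim
  matching' _ _ huv _ hy _ _ _ hx h _ := (G.ne_of_adj huv (hy.symm.trans (h.1.trans hx))).elim

variable (G m) in
theorem exists_count_eq_PDP : ∃ C : DPCover G m, C.count = PDP G m :=
  Nat.sInf_mem (s := {n | ∃ C : DPCover G m, C.count = n}) ⟨_, disjointCliques G m, rfl⟩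

theorem PDP_le_count (C : DPCover G m) : PDP G m ≤ C.count :=
  Nat.sInf_le ⟨C, rfl⟩

variable {w : V} (C : DPCover (G.induce ({w}ᶜ : Set V)) m)
  (τ : ∀ v : ({w}ᶜ : Set V), Fin m ↪ C.L v)

/-- `Sum.inr j` is the color `j` in the new list of `w`; it is matched to `τ v j` in the list
of each neighbour `v` of `w`. -/
def extendAdj : C.X ⊕ Fin m → C.X ⊕ Fin m → Prop
  | .inl x, .inl y => C.H.Adj x y
  | .inr i, .inr j => i ≠ j
  | .inl x, .inr j | .inr j, .inl x => ∃ v : ({w}ᶜ : Set V), G.Adj w v ∧ x = τ v j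

def extendL (v : V) : Set (C.X ⊕ Fin m) :=
  Sum.elim (fun x => ∃ h : v ≠ w, x ∈ C.L ⟨v, h⟩) fun _ => v = w

@[simp]
theorem inl_mem_extendL {x : C.X} {v : V} :
    .inl x ∈ C.extendL v ↔ ∃ h : v ≠ w, x ∈ C.L ⟨v, h⟩ :=
  Iff.rfl

@[simp]
theorem inr_mem_extendL {j : Fin m} {v : V} : .inr j ∈ C.extendL v ↔ v = w :=
  Iff.rfl

theorem extendL_self : C.extendL w = Set.range .inr := by
  ext (x | j) <;> simp

theorem extendL_of_ne {v : V} (hv : v ≠ w) : C.extendL v = .inl '' C.L ⟨v, hv⟩ := by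
  ext (x | j) <;> simp [hv]

theorem extendAdj_inl_inr_iff {x : C.X} {u : ({w}ᶜ : Set V)} (hx : x ∈ C.L u) {j : Fin m} :
    C.extendAdj τ (.inl x) (.inr j) ↔ G.Adj w u ∧ x = τ u j := by
  refine ⟨fun ⟨v, hv, hxv⟩ => ?_, fun h => ⟨u, h⟩⟩
  obtain rfl := C.eq_of_mem_L hx (hxv ▸ (τ v j).2)
  exact ⟨hv, hxv⟩

theorem extendAdj_symm {a b : C.X ⊕ Fin m} (h : C.extendAdj τ a b) : C.extendAdj τ b a := by
  rcases a with x | i <;> rcases b with y | j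
  exacts [C.H.adj_symm h, h, h, Ne.symm h]

theorem extendAdj_matching {u v : V} (huv : G.Adj u v) {x y z : C.X ⊕ Fin m}
    (hx : x ∈ C.extendL u) (hy : y ∈ C.extendL v) (hz : z ∈ C.extendL v)
    (hxy : C.extendAdj τ x y) (hxz : C.extendAdj τ x z) : y = z := by
  rcases x with x | i <;> rcases y with y | j <;> rcases z with z | k <;>
    simp only [inl_mem_extendL, inr_mem_extendL] at hx hy hz
  · obtain ⟨hu, hx⟩ := hx
    obtain ⟨hv, hy⟩ := hy
    obtain ⟨_, hz⟩ := hz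
    exact congrArg _ (C.matching ⟨u, hu⟩ ⟨v, hv⟩ huv x hx y hy z hz hxy hxz)
  · exact (hy.1 hz).elim
  · exact (hz.1 hy).elim
  · obtain ⟨hu, hx⟩ := hx
    rw [C.extendAdj_inl_inr_iff τ hx] at hxy hxz
    rw [(τ _).injective (Subtype.ext (hxy.2.symm.trans hxz.2))]
  · obtain ⟨hv, hy⟩ := hy
    obtain ⟨_, hz⟩ := hz
    rw [(C.extendAdj_inl_inr_iff τ hy).1 (C.extendAdj_symm τ hxy) |>.2,
      (C.extendAdj_inl_inr_iff τ hz).1 (C.extendAdj_symm τ hxz) |>.2]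
  · exact (hy.1 hz).elim
  · exact (hz.1 hy).elim
  · rw [hx, hy] at huv
    exact (G.irrefl huv).elim

def extend : DPCover G m where
  X := C.X ⊕ Fin m
  H := { Adj := C.extendAdj τ
         symm := ⟨fun _ _ => C.extendAdj_symm τ⟩
         loopless := ⟨by rintro (x | i) h; exacts [C.H.irrefl h, h rfl]⟩ }
  L := C.extendL
  partition := by
    rintro (x | j)
    · obtain ⟨u, hu, -⟩ := C.partition x
      exact ⟨u, (C.inl_mem_extendL).2 ⟨u.2, hu⟩,
        fun v ⟨_, hv⟩ => congrArg Subtype.val (C.eq_of_mem_L hv hu)⟩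
    · exact ⟨w, rfl, fun _ h => h⟩
  fold v := by
    by_cases hv : v = w
    · rw [hv, extendL_self, Nat.card_range_of_injective Sum.inr_injective, Nat.card_fin]
    · rw [C.extendL_of_ne hv, Nat.card_image_of_injective Sum.inl_injective, C.fold]
  cliques v := by
    rintro (x | i) hx (y | j) hy hne <;>
      simp only [inl_mem_extendL, inr_mem_extendL] at hx hy
    · obtain ⟨_, hx⟩ := hx
      obtain ⟨_, hy⟩ := hy
      exact C.cliques _ x hx y hy fun h => hne (congrArg _ h)
    · exact (hx.1 hy).elim
    · exact (hy.1 hx).elim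
    · exact fun h => hne (congrArg _ h)
  cross u v := by
    rintro (x | i) hx (y | j) hy hxy <;>
      simp only [inl_mem_extendL, inr_mem_extendL] at hx hy
    · obtain ⟨_, hx⟩ := hx
      obtain ⟨_, hy⟩ := hy
      exact (C.cross _ _ x hx y hy hxy).imp (congrArg Subtype.val) id
    · obtain ⟨_, hx⟩ := hx
      exact .inr (hy ▸ ((C.extendAdj_inl_inr_iff τ hx).1 hxy).1.symm)
    · obtain ⟨_, hy⟩ := hy
      exact .inr (hx ▸ ((C.extendAdj_inl_inr_iff τ hy).1 (C.extendAdj_symm τ hxy)).1)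
    · exact .inl (hx.trans hy.symm)
  matching _ _ huv _ hx _ hy _ hz := C.extendAdj_matching τ huv hx hy hz
  matching' _ _ huv _ hy _ hz _ hx hyx hzx :=
    C.extendAdj_matching τ (G.adj_symm huv) hx hy hz (C.extendAdj_symm τ hyx)
      (C.extendAdj_symm τ hzx)

abbrev Extension : Type :=
  {p : C.Coloring × Fin m // ∀ v : ({w}ᶜ : Set V), G.Adj w v → p.1.1 v ≠ τ v p.2}

variable [DecidableEq V]

def glue (g : ({w}ᶜ : Set V) → C.X) (j : Fin m) (v : V) : C.X ⊕ Fin m :=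
  if h : v = w then .inr j else .inl (g ⟨v, h⟩)

variable (g : ({w}ᶜ : Set V) → C.X) (j : Fin m)

theorem glue_self : C.glue g j w = .inr j :=
  dif_pos rfl

theorem glue_of_ne {v : V} (hv : v ≠ w) : C.glue g j v = .inl (g ⟨v, hv⟩) :=
  dif_neg hv

theorem glue_injective {g' : ({w}ᶜ : Set V) → C.X} {j' : Fin m}
    (h : C.glue g j = C.glue g' j') : g = g' ∧ j = j' := by
  refine ⟨funext fun v => ?_, ?_⟩
  · simpa only [C.glue_of_ne _ _ v.2, Sum.inl.injEq] using congrFun h v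
  · simpa only [glue_self, Sum.inr.injEq] using congrFun h w

theorem exists_glue_eq {f : V → C.X ⊕ Fin m} (hf : ∀ v, f v ∈ C.extendL v) :
    ∃ g j, C.glue g j = f := by
  obtain ⟨j, hj⟩ : ∃ j, f w = .inr j := by
    rcases hfw : f w with x | j
    · have := hf w
      rw [hfw, inl_mem_extendL] at this
      exact (this.1 rfl).elim
    · exact ⟨j, rfl⟩
  have (v : ({w}ᶜ : Set V)) : ∃ x, f v = .inl x := by
    rcases hfv : f v with x | j
    · exact ⟨x, rfl⟩
    · have := hf v
      rw [hfv, inr_mem_extendL] at this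
      exact (v.2 this).elim
  choose g hg using this
  refine ⟨g, j, funext fun v => ?_⟩
  by_cases hv : v = w
  · rw [hv, glue_self, hj]
  · rw [C.glue_of_ne g j hv, hg ⟨v, hv⟩]

theorem isColoring_glue_iff :
    (C.extend τ).IsColoring (C.glue g j) ↔
      C.IsColoring g ∧ ∀ v : ({w}ᶜ : Set V), G.Adj w v → g v ≠ τ v j := by
  constructor
  · rintro ⟨hmem, hind⟩
    have hg (v : ({w}ᶜ : Set V)) : g v ∈ C.L v := by
      have := hmem v
      rw [C.glue_of_ne g j v.2] at this
      exact this.2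
    refine ⟨⟨hg, fun u v huv hadj => ?_⟩, fun v hv hgv => ?_⟩
    · have := hind u v (Subtype.coe_injective.ne huv)
      rw [C.glue_of_ne g j u.2, C.glue_of_ne g j v.2] at this
      exact this hadj
    · have := hind w v fun h => v.2 h.symm
      rw [glue_self, C.glue_of_ne g j v.2] at this
      exact this (C.extendAdj_symm τ ((C.extendAdj_inl_inr_iff τ (hg v)).2 ⟨hv, hgv⟩))
  · rintro ⟨⟨hg, hind⟩, havoid⟩
    have avoid {u : V} (hu : u ≠ w) : ¬C.extendAdj τ (.inl (g ⟨u, hu⟩)) (.inr j) :=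
      fun h => havoid _ ((C.extendAdj_inl_inr_iff τ (hg _)).1 h).1
        ((C.extendAdj_inl_inr_iff τ (hg _)).1 h).2
    refine ⟨fun v => ?_, fun u v huv => ?_⟩
    · by_cases hv : v = w
      · rw [hv, glue_self]
        rfl
      · rw [C.glue_of_ne g j hv]
        exact ⟨hv, hg _⟩
    · by_cases hu : u = w <;> by_cases hv : v = w
      · exact (huv (hu.trans hv.symm)).elim
      · rw [hu, glue_self, C.glue_of_ne g j hv]
        exact fun h => avoid hv (C.extendAdj_symm τ h)
      · rw [hv, glue_self, C.glue_of_ne g j hu]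
        exact avoid hu
      · rw [C.glue_of_ne g j hu, C.glue_of_ne g j hv]
        exact hind ⟨u, hu⟩ ⟨v, hv⟩ fun h => huv (congrArg Subtype.val h)

theorem count_extend : (C.extend τ).count = Nat.card (C.Extension τ) := by
  refine (Nat.card_eq_of_bijective (fun p => ⟨C.glue p.1.1.1 p.1.2,
    (C.isColoring_glue_iff τ _ _).2 ⟨p.1.1.2, p.2⟩⟩) ⟨?_, ?_⟩).symm
  · rintro ⟨⟨⟨g, hg⟩, j⟩, hp⟩ ⟨⟨⟨g', hg'⟩, j'⟩, hp'⟩ h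
    obtain ⟨rfl, rfl⟩ := C.glue_injective g j (congrArg Subtype.val h)
    rfl
  · rintro ⟨f, hf⟩
    obtain ⟨g, j, rfl⟩ := C.exists_glue_eq hf.1
    obtain ⟨hg, hj⟩ := (C.isColoring_glue_iff τ g j).1 hf
    exact ⟨⟨(⟨g, hg⟩, j), hj⟩, rfl⟩

end DPCover

theorem exists_card_mul_card_le_sum {K P : Type*} [Fintype K] [Nonempty K] [Fintype P]
    (R : K → P → Prop) :
    ∃ k, Fintype.card K * Nat.card {p // R k p} ≤ ∑ p, Nat.card {k // R k p} := by
  classical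
  obtain ⟨k, -, hk⟩ := exists_min_image univ (fun k => Nat.card {p // R k p}) univ_nonempty
  refine ⟨k, ?_⟩
  calc Fintype.card K * Nat.card {p // R k p} ≤ ∑ k', Nat.card {p // R k' p} := by
        simpa using card_nsmul_le_sum univ _ _ fun k' _ => hk k' (mem_univ k')
    _ = ∑ p, Nat.card {k // R k p} := by
        simp only [Nat.card_eq_fintype_card, Fintype.card_subtype, card_filter]
        exact sum_comm

theorem card_fun_avoiding {ι : Type*} [Fintype ι] {m : ℕ} (P : ι → Prop) [DecidablePred P]
    (c : ι → Fin m) :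
    Nat.card {k : ι → Fin m // ∀ i, P i → k i ≠ c i} =
      (m - 1) ^ #{i | P i} * m ^ #{i | ¬P i} := by
  have (i : ι) : Nat.card {a : Fin m // P i → a ≠ c i} = if P i then m - 1 else m := by
    by_cases hi : P i <;> simp [hi, Nat.card_eq_fintype_card, Fintype.card_subtype_compl]
  rw [Nat.card_congr (Equiv.subtypePiEquivPi (p := fun i a => P i → a ≠ c i)), Nat.card_pi,
    prod_congr rfl fun i _ => this i, prod_ite, prod_const, prod_const]

theorem cast_le_mul_one_sub_inv_pow {m d N c : ℕ} (hm : 0 < m)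
    (h : m ^ d * N ≤ m * (m - 1) ^ d * c) : (N : ℚ) ≤ m * (1 - 1 / m) ^ d * c := by
  have hm' : (0 : ℚ) < m := by exact_mod_cast hm
  have h' : (m : ℚ) ^ d * N ≤ m * (m - 1) ^ d * c := by
    have := (Nat.cast_le (α := ℚ)).2 h
    push_cast [Nat.cast_sub (Nat.one_le_of_lt hm)] at this
    exact this
  calc (N : ℚ) = m ^ d * N / m ^ d := by field_simp
    _ ≤ m * (m - 1) ^ d * c / m ^ d := by gcongr
    _ = m * (1 - 1 / m) ^ d * c := by
      rw [one_sub_div hm'.ne', div_pow]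
      field_simp

theorem SimpleGraph.card_adj_compl_eq_degree {V : Type} [Fintype V] [DecidableEq V]
    (G : SimpleGraph V) [DecidableRel G.Adj] (w : V) :
    #{v : ({w}ᶜ : Set V) | G.Adj w v} = G.degree w := by
  rw [← G.card_neighborSet_eq_degree, ← Fintype.card_subtype]
  exact Fintype.card_congr (Equiv.subtypeSubtypeEquivSubtype fun h => (G.ne_of_adj h).symm)

namespace DPCover

variable {V : Type} [Fintype V] [DecidableEq V] {G : SimpleGraph V} [DecidableRel G.Adj]
  {w : V} {m : ℕ} [NeZero m] (C : DPCover (G.induce ({w}ᶜ : Set V)) m)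
  (e : ∀ v : ({w}ᶜ : Set V), C.L v ≃ Fin m)

def shiftMatching (k : ({w}ᶜ : Set V) → Fin m) (v : ({w}ᶜ : Set V)) : Fin m ↪ C.L v :=
  ((Equiv.addRight (k v)).trans (e v).symm).toEmbedding

theorem card_shift_avoiding (p : C.Coloring × Fin m) :
    Nat.card {k // ∀ v : ({w}ᶜ : Set V), G.Adj w v → p.1.1 v ≠ C.shiftMatching e k v p.2} =
      (m - 1) ^ G.degree w * m ^ #{v : ({w}ᶜ : Set V) | ¬G.Adj w v} := by
  rw [← card_adj_compl_eq_degree,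
    ← card_fun_avoiding _ fun v => e v ⟨p.1.1 v, p.1.2.1 v⟩ - p.2]
  refine Nat.card_congr <|
    Equiv.subtypeEquivRight fun k => forall₂_congr fun v _ => not_congr ?_
  rw [eq_sub_iff_add_eq', eq_comm (a := p.2 + k v), ← Equiv.eq_symm_apply, Subtype.ext_iff]
  rfl

omit [NeZero m] in
theorem exists_card_extension_le :
    ∃ τ : ∀ v : ({w}ᶜ : Set V), Fin m ↪ C.L v,
      (Nat.card (C.Extension τ) : ℚ) ≤ m * (1 - 1 / m) ^ G.degree w * C.count := by
  rcases Nat.eq_zero_or_pos m with rfl | hm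
  · exact ⟨fun _ => Function.Embedding.ofIsEmpty, by simp⟩
  have : NeZero m := ⟨hm.ne'⟩
  have := C.finite_coloring hm.ne'
  have := Fintype.ofFinite C.Coloring
  obtain ⟨k, hk⟩ := exists_card_mul_card_le_sum fun k (p : C.Coloring × Fin m) =>
    ∀ v : ({w}ᶜ : Set V), G.Adj w v → p.1.1 v ≠ C.shiftMatching (C.equivFin hm.ne') k v p.2
  refine ⟨C.shiftMatching (C.equivFin hm.ne') k, cast_le_mul_one_sub_inv_pow hm ?_⟩
  have hsplit : Fintype.card ({w}ᶜ : Set V) =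
      G.degree w + #{v : ({w}ᶜ : Set V) | ¬G.Adj w v} := by
    rw [← card_adj_compl_eq_degree, card_filter_add_card_filter_not, card_univ]
  rw [sum_congr rfl fun p _ => C.card_shift_avoiding _ p, sum_const, card_univ, smul_eq_mul,
    Fintype.card_fun, Fintype.card_fin, hsplit, pow_add, Fintype.card_prod, Fintype.card_fin,
    ← Nat.card_eq_fintype_card] at hk
  unfold count
  exact Nat.le_of_mul_le_mul_right (c := m ^ #{v : ({w}ᶜ : Set V) | ¬G.Adj w v})
    (by convert hk using 1 <;> ring) (by positivity)

end DPCover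

theorem stmt_12 {V : Type} [Fintype V] [DecidableEq V] (G : SimpleGraph V)
    [DecidableRel G.Adj] (w : V) (d : ℕ) (hd : G.degree w = d) (m : ℕ) :
    (PDP G m : ℚ) ≤
      (m : ℚ) * (1 - 1 / (m : ℚ)) ^ d * (PDP (G.induce ({w}ᶜ : Set V)) m : ℚ) := by
  obtain ⟨C, hC⟩ := DPCover.exists_count_eq_PDP (G.induce ({w}ᶜ : Set V)) m
  obtain ⟨τ, hτ⟩ := C.exists_card_extension_le
  calc (PDP G m : ℚ) ≤ Nat.card (C.Extension τ) := by
        exact_mod_cast C.count_extend τ ▸ (C.extend τ).PDP_le_count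
    _ ≤ _ := by rwa [hC, hd] at hτ
end

section
/- For the cycle C_n: if n is odd then P_DP(C_n,m) = (m-1)^n − (m-1) for all m ∈ ℕ; if n is even then P_DP(C_n,m) = (m-1)^n − 1 for all m ≥ 2. -/
open SimpleGraph

/-!
Label each list `L(v)` by `Fin m`. Extending every partial matching of an `m`-fold cover of the
cycle to a bijection only deletes colorings, so it suffices to count colorings of covers given by
permutations `σ_i` on the edges `i (i+1)`: sequences `c` with `c (i+1) ≠ σ_i (c i)`. Contracting
the closing edge gives `P_n(τ) + P_{n-1}(τ σ_{n-1}) = m (m-1)^(n-1)` for the number `P_n(τ)` of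
such sequences on a path closed up by `τ`, hence the count is `(m-1)^n + (-1)^n (f - 1)`, where
`f` is the number of fixed points of the holonomy `σ_{n-1} ⋯ σ_0`. Every holonomy is realised by
a cover, so `P_DP` is the minimum over `0 ≤ f ≤ m`: `f = m` for odd `n`, and `f = 0` (a rotation
of `Fin m`) for even `n`.
-/

open Finset Equiv

def holonomy {α : Type*} : {k : ℕ} → (Fin k → Perm α) → Perm α
  | 0, _ => 1
  | _ + 1, ρ => ρ (Fin.last _) * holonomy (Fin.init ρ)

lemma holonomy_one {α : Type*} : ∀ {k : ℕ}, holonomy (fun _ : Fin k => (1 : Perm α)) = 1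
  | 0 => rfl
  | _ + 1 => by rw [holonomy, one_mul]; exact holonomy_one

section TwistedColorings

variable {m k : ℕ}

def pathColorings (ρ : Fin k → Perm (Fin m)) : Finset (Fin (k + 1) → Fin m) :=
  {c | ∀ i, ρ i (c i.castSucc) ≠ c i.succ}

def cycleColorings (ρ : Fin k → Perm (Fin m)) (τ : Perm (Fin m)) :
    Finset (Fin (k + 1) → Fin m) :=
  {c ∈ pathColorings ρ | τ (c (Fin.last k)) ≠ c 0}

def cycleCount (n : ℕ) (π : Perm (Fin m)) : ℤ :=
  (m - 1) ^ n + (-1) ^ n * (#{a | π a = a} - 1)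

lemma mem_pathColorings_succ {ρ : Fin (k + 1) → Perm (Fin m)} {c : Fin (k + 2) → Fin m} :
    c ∈ pathColorings ρ ↔ Fin.init c ∈ pathColorings (Fin.init ρ) ∧
      ρ (Fin.last k) (c (Fin.last k).castSucc) ≠ c (Fin.last (k + 1)) := by
  simp only [pathColorings, mem_filter, mem_univ, true_and]
  rw [Fin.forall_fin_succ']
  simp only [Fin.init, Fin.succ_castSucc, Fin.succ_last]

lemma card_filter_ne_fin (a : Fin m) : (#{b | a ≠ b} : ℤ) = m - 1 := by
  have : 1 ≤ m := Fin.pos_iff_nonempty.2 ⟨a⟩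
  rw [filter_ne, card_erase_of_mem (mem_univ a), card_univ, Fintype.card_fin]
  push_cast [this]
  ring

lemma card_filter_init_eq {ρ : Fin (k + 1) → Perm (Fin m)} {c' : Fin (k + 1) → Fin m}
    (hc' : c' ∈ pathColorings (Fin.init ρ)) :
    #{c ∈ pathColorings ρ | Fin.init c = c'} = #{b | ρ (Fin.last k) (c' (Fin.last k)) ≠ b} := by
  refine card_nbij' (fun c => c (Fin.last _)) (fun b => Fin.snoc c' b) ?_ ?_ ?_ ?_
  · intro c hc
    simp only [coe_filter, Set.mem_ofPred_eq, mem_pathColorings_succ] at hc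
    obtain ⟨⟨-, hlast⟩, rfl⟩ := hc
    exact mem_filter.2 ⟨mem_univ _, hlast⟩
  · intro b hb
    simp only [coe_filter, mem_univ, true_and, Set.mem_ofPred_eq] at hb
    simp [mem_pathColorings_succ, hc', hb]
  · intro c hc
    obtain ⟨-, rfl⟩ := mem_filter.1 (mem_coe.1 hc)
    exact Fin.snoc_init_self c
  · intro b _
    exact Fin.snoc_last _ _

lemma card_pathColorings (ρ : Fin k → Perm (Fin m)) :
    (#(pathColorings ρ) : ℤ) = m * (m - 1) ^ k := by
  induction k with
  | zero => simp [pathColorings]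
  | succ k ih =>
    rw [card_eq_sum_card_fiberwise (f := Fin.init) (t := pathColorings (Fin.init ρ))
        (fun c hc => (mem_pathColorings_succ.1 (mem_coe.1 hc)).1), Nat.cast_sum,
      sum_congr rfl fun c' hc' => by rw [card_filter_init_eq hc', card_filter_ne_fin],
      sum_const, nsmul_eq_mul, ih]
    ring

lemma card_cycleColorings_zero (ρ : Fin 0 → Perm (Fin m)) (τ : Perm (Fin m)) :
    #(cycleColorings ρ τ) = #{a | τ a ≠ a} := by
  refine card_nbij' (· 0) (fun a _ => a) ?_ ?_ ?_ ?_
  · intro c hc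
    exact mem_filter.2 ⟨mem_univ _, (mem_filter.1 (mem_coe.1 hc)).2⟩
  · intro a ha
    exact mem_filter.2 ⟨mem_filter.2 ⟨mem_univ _, nofun⟩, (mem_filter.1 (mem_coe.1 ha)).2⟩
  · intro c _
    funext i
    rw [Fin.fin_one_eq_zero i]
  · intro a _
    rfl

/-- Deletion–contraction of the closing edge: a path coloring with `τ (c last) = c 0` is a
coloring of the shorter closed path whose last vertex has been identified with `τ⁻¹ (c 0)`. -/
lemma card_cycleColorings_add (ρ : Fin (k + 1) → Perm (Fin m)) (τ : Perm (Fin m)) :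
    #(cycleColorings ρ τ) + #(cycleColorings (Fin.init ρ) (τ * ρ (Fin.last k))) =
      #(pathColorings ρ) := by
  rw [← card_filter_add_card_filter_not (s := pathColorings ρ)
    (p := fun c => τ (c (Fin.last _)) ≠ c 0)]
  congr 1
  symm
  refine card_nbij' Fin.init (fun c => Fin.snoc c (τ⁻¹ (c 0))) ?_ ?_ ?_ ?_
  · intro c hc
    simp only [coe_filter, Set.mem_ofPred_eq, mem_pathColorings_succ, not_not] at hc
    obtain ⟨⟨hpath, hlast⟩, hclose⟩ := hc
    refine mem_filter.2 ⟨hpath, fun h => hlast (τ.injective ?_)⟩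
    simpa [Fin.init, hclose] using h
  · intro c hc
    obtain ⟨hpath, hclose⟩ := mem_filter.1 (mem_coe.1 hc)
    refine mem_filter.2 ⟨mem_pathColorings_succ.2 ⟨by rwa [Fin.init_snoc], ?_⟩, ?_⟩
    · dsimp only
      rw [Fin.snoc_castSucc, Fin.snoc_last, Ne, Perm.eq_inv_iff_eq]
      exact hclose
    · simp
  · intro c hc
    simp only [coe_filter, Set.mem_ofPred_eq, not_not] at hc
    have hlast : τ⁻¹ (Fin.init c 0) = c (Fin.last _) := by
      rw [Perm.inv_eq_iff_eq]
      exact hc.2.symm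
    simp only [hlast]
    exact Fin.snoc_init_self c
  · intro c _
    exact Fin.init_snoc _ _

lemma card_cycleColorings (ρ : Fin k → Perm (Fin m)) (τ : Perm (Fin m)) :
    (#(cycleColorings ρ τ) : ℤ) = cycleCount (k + 1) (τ * holonomy ρ) := by
  induction k generalizing τ with
  | zero =>
    have hsplit := card_filter_add_card_filter_not (s := univ) (fun a : Fin m => τ a = a)
    rw [card_univ, Fintype.card_fin] at hsplit
    rw [holonomy, mul_one, card_cycleColorings_zero, cycleCount]
    linear_combination (norm := (push_cast; ring)) congrArg (Nat.cast (R := ℤ)) hsplit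
  | succ k ih =>
    have hsplit := card_cycleColorings_add ρ τ
    rw [← Nat.cast_inj (R := ℤ), Nat.cast_add, card_pathColorings, ih] at hsplit
    rw [holonomy, ← mul_assoc]
    simp only [cycleCount] at hsplit ⊢
    linear_combination hsplit

end TwistedColorings

lemma Equiv.Perm.exists_extending_rel {α : Type*} [Finite α] {R : α → α → Prop}
    (hfun : ∀ a b b', R a b → R a b' → b = b') (hinj : ∀ a a' b, R a b → R a' b → a = a') :
    ∃ π : Perm α, ∀ a b, R a b → π a = b := by
  choose g hg using fun a : {a // ∃ b, R a b} => a.2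
  obtain ⟨π, hπ⟩ := Perm.exists_extending_pair Subtype.val g Subtype.val_injective
    fun a a' h => Subtype.ext (hinj _ _ _ (hg a) (h ▸ hg a'))
  exact ⟨π, fun a b hab => (hπ ⟨a, b, hab⟩).trans (hfun _ _ _ (hg _) hab)⟩

section PermVoltage

variable {V : Type} {G : SimpleGraph V} {m : ℕ} {σ : V → V → Perm (Fin m)}

def twistedColorings (G : SimpleGraph V) (σ : V → V → Perm (Fin m)) : Set (V → Fin m) :=
  {c | ∀ ⦃u v⦄, G.Adj u v → σ u v (c u) ≠ c v}

def IsPermVoltage (G : SimpleGraph V) (σ : V → V → Perm (Fin m)) : Prop :=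
  ∀ ⦃u v⦄, G.Adj u v → σ v u = (σ u v)⁻¹

def permVoltageGraph (hσ : IsPermVoltage G σ) : SimpleGraph (V × Fin m) where
  Adj x y := (x.1 = y.1 ∧ x.2 ≠ y.2) ∨ (G.Adj x.1 y.1 ∧ σ x.1 y.1 x.2 = y.2)
  symm := ⟨by
    rintro x y (⟨h1, h2⟩ | ⟨hadj, h⟩)
    · exact Or.inl ⟨h1.symm, h2.symm⟩
    · refine Or.inr ⟨hadj.symm, ?_⟩
      rw [hσ hadj, Perm.inv_eq_iff_eq, h]⟩
  loopless := ⟨by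
    rintro x (⟨-, h⟩ | ⟨h, -⟩)
    · exact h rfl
    · exact G.loopless.irrefl _ h⟩

lemma permVoltageGraph_adj_iff (hσ : IsPermVoltage G σ) {x y : V × Fin m} (h : G.Adj x.1 y.1) :
    (permVoltageGraph hσ).Adj x y ↔ σ x.1 y.1 x.2 = y.2 := by
  simp [permVoltageGraph, h, h.ne]

def DPCover.ofPermVoltage (hσ : IsPermVoltage G σ) : DPCover G m where
  X := V × Fin m
  H := permVoltageGraph hσ
  L v := {x | x.1 = v}
  partition x := ⟨x.1, rfl, fun _ h => h.symm⟩
  fold v := by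
    rw [Set.coe_ofPred, Nat.card_congr (Equiv.prodSubtypeFstEquivSubtypeProd (p := (· = v))),
      Nat.card_prod, Nat.card_unique, Nat.card_eq_fintype_card, Fintype.card_fin, one_mul]
  cliques v x hx y hy hxy :=
    Or.inl ⟨hx.trans hy.symm, fun h => hxy (Prod.ext (hx.trans hy.symm) h)⟩
  cross u v x hx y hy := by
    rintro (⟨h, -⟩ | ⟨h, -⟩)
    · exact Or.inl (hx.symm.trans (h.trans hy))
    · exact Or.inr (hx ▸ hy ▸ h)
  matching u v huv x hx y hy z hz hxy hxz := by
    subst hx hy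
    rw [permVoltageGraph_adj_iff hσ huv] at hxy
    rw [permVoltageGraph_adj_iff hσ (hz ▸ huv), hz] at hxz
    exact Prod.ext hz.symm (hxy.symm.trans hxz)
  matching' u v huv y hy z hz x hx hyx hzx := by
    subst hy hx
    rw [permVoltageGraph_adj_iff hσ huv] at hyx
    rw [permVoltageGraph_adj_iff hσ (hz ▸ huv), hz] at hzx
    exact Prod.ext hz.symm ((σ _ _).injective (hyx.trans hzx.symm))

theorem DPCover.count_ofPermVoltage (hσ : IsPermVoltage G σ) :
    (DPCover.ofPermVoltage hσ).count = Nat.card (twistedColorings G σ) := by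
  refine Nat.card_congr
    { toFun := fun f => ⟨fun v => (f.1 v).2, fun u v huv h => ?_⟩
      invFun := fun c => ⟨fun v => (v, c.1 v), fun _ => rfl, ?_⟩
      left_inv := fun f => Subtype.ext (funext fun v => Prod.ext (f.2.1 v).symm rfl)
      right_inv := fun _ => rfl }
  · obtain ⟨f, hfL, hfH⟩ := f
    have hfL : ∀ v, (f v).1 = v := hfL
    have hadj : G.Adj (f u).1 (f v).1 := by rwa [hfL, hfL]
    refine hfH u v huv.ne ((permVoltageGraph_adj_iff hσ hadj).2 ?_)
    rwa [hfL, hfL]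
  · rintro u v huv (⟨h, -⟩ | ⟨hadj, h⟩)
    · exact huv h
    · exact c.2 hadj h

lemma DPCover.exists_permVoltage_extending [LinearOrder V] (C : DPCover G m)
    (Ψ : ∀ v, Fin m ≃ C.L v) :
    ∃ σ : V → V → Perm (Fin m), IsPermVoltage G σ ∧
      ∀ ⦃u v⦄, G.Adj u v → ∀ a b, C.H.Adj (Ψ u a) (Ψ v b) → σ u v a = b := by
  have hext : ∀ u v, G.Adj u v → ∃ π : Perm (Fin m),
      ∀ a b, C.H.Adj (Ψ u a) (Ψ v b) → π a = b := fun u v huv =>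
    Perm.exists_extending_rel
      (fun a b b' h h' => (Ψ v).injective <| Subtype.ext <|
        C.matching u v huv _ (Ψ u a).2 _ (Ψ v b).2 _ (Ψ v b').2 h h')
      (fun a a' b h h' => (Ψ u).injective <| Subtype.ext <|
        C.matching' u v huv _ (Ψ u a).2 _ (Ψ u a').2 _ (Ψ v b).2 h h')
  choose! e he using hext
  -- extend along each edge from its smaller end only, so that the two directions are inverse
  refine ⟨fun u v => if u < v then e u v else (e v u)⁻¹, fun u v huv => ?_,
    fun u v huv a b h => ?_⟩
  · rcases huv.ne.lt_or_gt with huv' | huv'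
    · simp [huv', huv'.not_gt]
    · simp [huv', huv'.not_gt]
  · rcases huv.ne.lt_or_gt with huv' | huv'
    · simpa [huv'] using he u v huv a b h
    · simp only [huv'.not_gt, if_false, Perm.inv_eq_iff_eq]
      exact (he v u huv.symm b a h.symm).symm

theorem DPCover.exists_permVoltage_card_le_count [Finite V] [LinearOrder V] (C : DPCover G m)
    (hm : 0 < m) :
    ∃ σ : V → V → Perm (Fin m), IsPermVoltage G σ ∧
      Nat.card (twistedColorings G σ) ≤ C.count := by
  have hL : ∀ v, Finite (C.L v) := fun v => Nat.finite_of_card_ne_zero (by rw [C.fold v]; omega)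
  let Ψ : ∀ v, Fin m ≃ C.L v := fun v => (Finite.equivFinOfCardEq (C.fold v)).symm
  obtain ⟨σ, hσ, hσΨ⟩ := C.exists_permVoltage_extending Ψ
  have : Finite {f // C.IsColoring f} :=
    Finite.of_injective (fun f v => (⟨f.1 v, f.2.1 v⟩ : C.L v)) fun f f' h =>
      Subtype.ext (funext fun v => congrArg Subtype.val (congrFun h v))
  refine ⟨σ, hσ, Nat.card_le_card_of_injective
    (fun c => ⟨fun v => Ψ v (c.1 v), fun v => (Ψ v _).2, fun u v huv h => ?_⟩) ?_⟩
  · rcases C.cross u v _ (Ψ u _).2 _ (Ψ v _).2 h with rfl | hadj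
    · exact huv rfl
    · exact c.2 hadj (hσΨ hadj _ _ h)
  · intro c c' h
    exact Subtype.ext (funext fun v =>
      (Ψ v).injective (Subtype.ext (congrFun (congrArg Subtype.val h) v)))

end PermVoltage

lemma PDP_eq_of_forall_le_of_exists {V : Type} {G : SimpleGraph V} {m : ℕ} {P : ℤ}
    (hle : ∀ C : DPCover G m, P ≤ C.count) (hex : ∃ C : DPCover G m, (C.count : ℤ) = P) :
    (PDP G m : ℤ) = P := by
  obtain ⟨C, hC⟩ := hex
  obtain ⟨C', hC'⟩ : PDP G m ∈ {n | ∃ C : DPCover G m, C.count = n} := Nat.sInf_mem ⟨_, C, rfl⟩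
  refine le_antisymm ?_ (hC' ▸ hle C')
  exact hC ▸ Nat.cast_le.2 (Nat.sInf_le ⟨C, rfl⟩)

section Cycle

variable {k m : ℕ}

lemma cycleGraph_adj_iff_eq_add_one {u v : Fin (k + 2)} :
    (cycleGraph (k + 2)).Adj u v ↔ u = v + 1 ∨ v = u + 1 := by
  rw [cycleGraph_adj, sub_eq_iff_eq_add, sub_eq_iff_eq_add, add_comm 1 v, add_comm 1 u]

lemma mem_twistedColorings_cycleGraph_iff {σ : Fin (k + 2) → Fin (k + 2) → Perm (Fin m)}
    (hσ : IsPermVoltage (cycleGraph (k + 2)) σ) {c : Fin (k + 2) → Fin m} :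
    c ∈ twistedColorings (cycleGraph (k + 2)) σ ↔ ∀ u, σ u (u + 1) (c u) ≠ c (u + 1) := by
  have hsucc : ∀ u : Fin (k + 2), (cycleGraph (k + 2)).Adj u (u + 1) := fun u =>
    cycleGraph_adj_iff_eq_add_one.2 (Or.inr rfl)
  refine ⟨fun hc u => hc (hsucc u), fun hc u v huv => ?_⟩
  rcases cycleGraph_adj_iff_eq_add_one.1 huv with rfl | rfl
  · rw [hσ (hsucc v), Ne, Perm.inv_eq_iff_eq]
    exact (hc v).symm
  · exact hc u

theorem card_twistedColorings_cycleGraph {σ : Fin (k + 2) → Fin (k + 2) → Perm (Fin m)}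
    (hσ : IsPermVoltage (cycleGraph (k + 2)) σ) :
    (Nat.card (twistedColorings (cycleGraph (k + 2)) σ) : ℤ) =
      cycleCount (k + 2)
        (σ (Fin.last _) 0 * holonomy fun i : Fin (k + 1) => σ i.castSucc i.succ) := by
  have hset : twistedColorings (cycleGraph (k + 2)) σ =
      ↑(cycleColorings (fun i : Fin (k + 1) => σ i.castSucc i.succ) (σ (Fin.last _) 0)) := by
    ext c
    rw [mem_twistedColorings_cycleGraph_iff hσ, Fin.forall_fin_succ']
    simp [cycleColorings, pathColorings, Fin.coeSucc_eq_succ, Fin.last_add_one]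
  rw [hset, Nat.card_coe_set_eq, Set.ncard_coe_finset, card_cycleColorings]

lemma exists_cycleCount_le_count (C : DPCover (cycleGraph (k + 2)) m) :
    ∃ π : Perm (Fin m), cycleCount (k + 2) π ≤ C.count := by
  rcases Nat.eq_zero_or_pos m with rfl | hm
  · exact ⟨1, by simp [cycleCount]⟩
  obtain ⟨σ, hσ, hle⟩ := C.exists_permVoltage_card_le_count hm
  exact ⟨_, (card_twistedColorings_cycleGraph hσ).symm.le.trans (by exact_mod_cast hle)⟩

def cycleTwist (τ : Perm (Fin m)) (u v : Fin (k + 2)) : Perm (Fin m) :=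
  if u = Fin.last _ ∧ v = 0 then τ else if u = 0 ∧ v = Fin.last _ then τ⁻¹ else 1

lemma isPermVoltage_cycleTwist (τ : Perm (Fin m)) :
    IsPermVoltage (cycleGraph (k + 2)) (cycleTwist τ) := by
  intro u v _
  have h0 : (0 : Fin (k + 2)) ≠ Fin.last _ := Fin.last_pos.ne
  unfold cycleTwist
  split_ifs <;> simp_all

lemma exists_count_eq_cycleCount (hk : 1 ≤ k) (τ : Perm (Fin m)) :
    ∃ C : DPCover (cycleGraph (k + 2)) m, (C.count : ℤ) = cycleCount (k + 2) τ := by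
  refine ⟨DPCover.ofPermVoltage (isPermVoltage_cycleTwist τ), ?_⟩
  have hpath : (fun i : Fin (k + 1) => cycleTwist τ i.castSucc i.succ) = fun _ => 1 := by
    funext i
    simp only [cycleTwist, Fin.castSucc_ne_last, false_and, if_false, Fin.castSucc_eq_zero_iff,
      Fin.succ_eq_last_succ, ite_eq_right_iff, and_imp]
    intro h0 hl
    have := congrArg Fin.val (h0.symm.trans hl)
    simp only [Fin.val_zero, Fin.val_last] at this
    omega
  rw [DPCover.count_ofPermVoltage, card_twistedColorings_cycleGraph (isPermVoltage_cycleTwist τ),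
    hpath, holonomy_one, mul_one]
  simp [cycleTwist]

theorem PDP_cycleGraph_eq (hk : 1 ≤ k) {P : ℤ}
    (hP : IsLeast (Set.range (cycleCount (m := m) (k + 2))) P) :
    (PDP (cycleGraph (k + 2)) m : ℤ) = P := by
  obtain ⟨⟨τ, hτ⟩, hlow⟩ := hP
  refine PDP_eq_of_forall_le_of_exists (fun C => ?_) ?_
  · obtain ⟨π, hπ⟩ := exists_cycleCount_le_count C
    exact (hlow ⟨π, rfl⟩).trans hπ
  · obtain ⟨C, hC⟩ := exists_count_eq_cycleCount hk τ
    exact ⟨C, hC.trans hτ⟩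

end Cycle

theorem stmt_14 (n : ℕ) (hn : 3 ≤ n) :
    (Odd n → ∀ m : ℕ,
      (PDP (cycleGraph n) m : ℤ) = ((m : ℤ) - 1) ^ n - ((m : ℤ) - 1)) ∧
    (Even n → ∀ m : ℕ, 2 ≤ m →
      (PDP (cycleGraph n) m : ℤ) = ((m : ℤ) - 1) ^ n - 1) := by
  obtain ⟨k, rfl⟩ : ∃ k, n = k + 2 := ⟨n - 2, by omega⟩
  have hk : 1 ≤ k := by omega
  refine ⟨fun hodd m => PDP_cycleGraph_eq hk ⟨⟨1, ?_⟩, ?_⟩,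
    fun heven m hm => PDP_cycleGraph_eq hk ⟨⟨finRotate m, ?_⟩, ?_⟩⟩
  · simp [cycleCount, hodd.neg_one_pow]
    ring
  · rintro _ ⟨π, rfl⟩
    have hfix := card_filter_le univ fun a => π a = a
    rw [card_univ, Fintype.card_fin] at hfix
    simp only [cycleCount, hodd.neg_one_pow]
    linarith [(Nat.cast_le (α := ℤ)).2 hfix]
  · have hfree : #{a | finRotate m a = a} = 0 := by
      refine card_eq_zero.2 (filter_eq_empty_iff.2 fun a _ => ?_)
      exact Perm.mem_support.1 (support_finRotate_of_le hm ▸ mem_univ a)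
    rw [cycleCount, hfree, heven.neg_one_pow]
    ring
  · rintro _ ⟨π, rfl⟩
    simp only [cycleCount, heven.neg_one_pow, one_mul]
    linarith [Nat.cast_nonneg (α := ℤ) #{a | π a = a}]
end
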